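/- arXiv:1907.10657 — 3 statements merged into one kernel-verified Lean document; each statement's English description precedes it below -/
import Mathlib

section
/- Let n ≥ 2 and let A(s) = sI_n + A and B(s) = sI_n + B be matrix pencils with A, B ∈ F^{n×n}. Then there exists a matrix pencil P(s) ∈ F[s]^{n×n} with normal rank n such that A(s) + P(s) is strictly equivalent to B(s). -/
/-- A polynomial matrix is a (matrix) pencil if every entry has degree at most 1. -/
def IsPencil {F : Type*} [Field F] {m n : ℕ} (M : Matrix (Fin m) (Fin n) (Polynomial F)) : Prop :=
  ∀ i j, (M i j).degree ≤ 1

/-- Normal rank of a polynomial matrix: its rank over the field of rational functions. -/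
noncomputable def normalRank {F : Type*} [Field F] {m n : ℕ}
    (M : Matrix (Fin m) (Fin n) (Polynomial F)) : ℕ :=
  (M.map (algebraMap (Polynomial F) (RatFunc F))).rank

/-- Strict equivalence of polynomial matrices (pencils):
`G = Q * H * R` for invertible constant matrices `Q`, `R`. -/
def StrictEquiv {F : Type*} [Field F] {m n : ℕ}
    (G H : Matrix (Fin m) (Fin n) (Polynomial F)) : Prop :=
  ∃ (Q : Matrix (Fin m) (Fin m) F) (R : Matrix (Fin n) (Fin n) F),
    IsUnit Q.det ∧ IsUnit R.det ∧ G = (Q.map Polynomial.C) * H * (R.map Polynomial.C)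

/-- The pencil `G₀ + s G₁` as a polynomial matrix. -/
noncomputable def pencilOf {F : Type*} [Field F] {m n : ℕ}
    (G₀ G₁ : Matrix (Fin m) (Fin n) F) : Matrix (Fin m) (Fin n) (Polynomial F) :=
  G₀.map Polynomial.C + (Polynomial.X : Polynomial F) • G₁.map Polynomial.C

/-- The homogeneous pencil `t G₀ + s G₁` (variables `s = X 0`, `t = X 1`). -/
noncomputable def homPencil {F : Type*} [Field F] {m n : ℕ}
    (G₀ G₁ : Matrix (Fin m) (Fin n) F) : Matrix (Fin m) (Fin n) (MvPolynomial (Fin 2) F) :=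
  (MvPolynomial.X 1 : MvPolynomial (Fin 2) F) • G₀.map MvPolynomial.C +
    (MvPolynomial.X 0 : MvPolynomial (Fin 2) F) • G₁.map MvPolynomial.C

/-- The set of `k × k` minors of a matrix. -/
def minorsSet {R : Type*} [CommRing R] {m n : ℕ} (M : Matrix (Fin m) (Fin n) R) (k : ℕ) :
    Set R :=
  { d | ∃ (ri : Fin k → Fin m) (ci : Fin k → Fin n),
      Function.Injective ri ∧ Function.Injective ci ∧ d = (M.submatrix ri ci).det }

/-- `g` is a greatest common divisor of the set `S`. -/
def IsGCDOf {R : Type*} [CommRing R] (g : R) (S : Set R) : Prop :=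
  (∀ x ∈ S, g ∣ x) ∧ ∀ d : R, (∀ x ∈ S, d ∣ x) → d ∣ g

/-- `φ 0, …, φ (n-1)` are homogeneous invariant factors (up to units) of the pencil
`G₀ + s G₁`: for each `k ≤ n` the product of the first `k` of them is a gcd of the
`k × k` minors of the homogeneous pencil `t G₀ + s G₁`. -/
def IsHomogeneousIF {F : Type*} [Field F] {n : ℕ} (G₀ G₁ : Matrix (Fin n) (Fin n) F)
    (φ : ℕ → MvPolynomial (Fin 2) F) : Prop :=
  ∀ k : ℕ, k ≤ n → IsGCDOf (∏ i ∈ Finset.range k, φ i) (minorsSet (homPencil G₀ G₁) k)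

/-- Extension of a finite family of invariant factors (indexed `1, …, n`, stored with
offset `1` so that `φ 0` is the first one) to all integer indices, with the convention
that it is `1` below the range and `0` above it. -/
def extIF {R : Type*} [CommRing R] (n : ℕ) (φ : ℕ → R) : ℤ → R :=
  fun j => if j < 1 then 1 else if (n : ℤ) < j then 0 else φ (j - 1).toNat

/-- Interlacing condition `φ_{i-r} ∣ ψ_i ∣ φ_{i+r}`, `1 ≤ i ≤ n`. -/
def Interlace {R : Type*} [CommRing R] (n r : ℕ) (φ ψ : ℕ → R) : Prop :=
  ∀ i : ℕ, 1 ≤ i → i ≤ n →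
    extIF n φ ((i : ℤ) - r) ∣ extIF n ψ (i : ℤ) ∧
      extIF n ψ (i : ℤ) ∣ extIF n φ ((i : ℤ) + r)

/-- The operation `P_X` on pencils, acting on the pair `(G₀, G₁)` of coefficients of
`G(s) = G₀ + s G₁`: for `X = [[x, y], [z, w]]`,
`P_X(s G₁ + G₀) = s (x G₁ + z G₀) + (y G₁ + w G₀)`. -/
def mapP {F : Type*} [Field F] {m n : ℕ} (X : Matrix (Fin 2) (Fin 2) F)
    (G : Matrix (Fin m) (Fin n) F × Matrix (Fin m) (Fin n) F) :
    Matrix (Fin m) (Fin n) F × Matrix (Fin m) (Fin n) F :=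
  (X 0 1 • G.2 + X 1 1 • G.1, X 0 0 • G.2 + X 1 0 • G.1)

/-- The substitution `Π_X(Φ)(s, t) = Φ(s x + t y, s z + t w)` for `X = [[x, y], [z, w]]`. -/
noncomputable def PiX {F : Type*} [Field F] (X : Matrix (Fin 2) (Fin 2) F)
    (Φ : MvPolynomial (Fin 2) F) : MvPolynomial (Fin 2) F :=
  MvPolynomial.aeval
    ![MvPolynomial.C (X 0 0) * MvPolynomial.X 0 + MvPolynomial.C (X 0 1) * MvPolynomial.X 1,
      MvPolynomial.C (X 1 0) * MvPolynomial.X 0 + MvPolynomial.C (X 1 1) * MvPolynomial.X 1] Φ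

/-- The homogeneous invariant factor of a nonzero `1 × 1` pencil `a(s) = a₀ + s a₁`:
the homogenization `t a₀ + s a₁`, made monic with respect to `s`
(equal to `t` when `a₁ = 0`). -/
noncomputable def homIF1 {F : Type*} [Field F] (a : Polynomial F) : MvPolynomial (Fin 2) F :=
  MvPolynomial.C (a.leadingCoeff)⁻¹ *
    (MvPolynomial.C (a.coeff 1) * MvPolynomial.X 0 + MvPolynomial.C (a.coeff 0) * MvPolynomial.X 1)

/-- The homogeneous pencil associated to a polynomial matrix pencil. -/
noncomputable def homOf {F : Type*} [Field F] {n : ℕ}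
    (M : Matrix (Fin n) (Fin n) (Polynomial F)) : Matrix (Fin n) (Fin n) (MvPolynomial (Fin 2) F) :=
  homPencil (M.map fun p => p.coeff 0) (M.map fun p => p.coeff 1)


namespace Stmt2Aux
open Matrix Polynomial

variable {F : Type*} [Field F]

/-- Cyclic shift matrix with an extra `1` in the top-left corner. -/
noncomputable def Mmat (F : Type*) [Field F] (n : ℕ) : Matrix (Fin n) (Fin n) F :=
  Matrix.of fun i j =>
    (if (i : ℕ) = (j : ℕ) + 1 ∨ ((i : ℕ) = 0 ∧ (j : ℕ) = n - 1) then 1 else 0) +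
      (if (i : ℕ) = 0 ∧ (j : ℕ) = 0 then 1 else 0)

lemma isUnit_det_aux {n : ℕ} (M : Matrix (Fin n) (Fin n) F) (σ : Equiv.Perm (Fin n))
    (h : (M.submatrix σ id).det = 1) : IsUnit M.det := by
  have h2 := Matrix.det_permute σ M
  rw [h] at h2
  exact IsUnit.of_mul_eq_one _ (by rw [mul_comm]; exact h2.symm)

lemma finRotate_eq_of_lt {m : ℕ} {i : Fin (m + 2)} (h : (i : ℕ) < m + 1) :
    finRotate (m + 2) i = ⟨(i : ℕ) + 1, by omega⟩ := by
  rw [finRotate_succ_apply]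
  apply Fin.ext
  rw [Fin.val_add_one, if_neg]
  intro hl
  rw [hl] at h
  simp [Fin.val_last] at h

lemma finRotate_eq_of_eq {m : ℕ} {i : Fin (m + 2)} (h : (i : ℕ) = m + 1) :
    finRotate (m + 2) i = ⟨0, by omega⟩ := by
  have hi : i = Fin.last (m + 1) := Fin.ext (by simpa [Fin.val_last] using h)
  subst hi
  rw [finRotate_succ_apply]
  apply Fin.ext
  rw [Fin.val_add_one, if_pos rfl]

lemma Mmat_perm_entry (m : ℕ) (i j : Fin (m + 2)) :
    ((Mmat F (m + 2)).submatrix (finRotate (m + 2)) id) i j =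
      if (i : ℕ) = (j : ℕ) then 1
      else if (i : ℕ) = m + 1 ∧ ((j : ℕ) = 0 ∨ (j : ℕ) = m + 1) then 1 else 0 := by
  have hj := j.isLt
  have hi := i.isLt
  rw [Matrix.submatrix_apply, id_eq]
  rcases Nat.lt_or_ge (i : ℕ) (m + 1) with h | h
  · rw [finRotate_eq_of_lt h]
    simp only [Mmat, Matrix.of_apply]
    norm_num
    try split_ifs <;> first | (norm_num; done) | (exfalso; omega)
  · have h' : (i : ℕ) = m + 1 := by omega
    rw [finRotate_eq_of_eq h']
    simp only [Mmat, Matrix.of_apply]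
    norm_num
    simp only [Fin.ext_iff, Fin.val_zero]
    try split_ifs <;> first | (norm_num; done) | (exfalso; omega)

lemma Mmat_sub_one_perm_entry (m : ℕ) (i j : Fin (m + 2)) :
    (((Mmat F (m + 2)) - 1).submatrix (finRotate (m + 2)) id) i j =
      if (i : ℕ) = (j : ℕ) then 1
      else if (j : ℕ) = (i : ℕ) + 1 ∧ (i : ℕ) < m + 1 then -1 else 0 := by
  have hj := j.isLt
  have hi := i.isLt
  rw [Matrix.submatrix_apply, id_eq, Matrix.sub_apply]
  rcases Nat.lt_or_ge (i : ℕ) (m + 1) with h | h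
  · rw [finRotate_eq_of_lt h]
    simp only [Mmat, Matrix.of_apply, Matrix.one_apply, Fin.ext_iff]
    norm_num
    try split_ifs <;> first | (norm_num; done) | (exfalso; omega)
  · have h' : (i : ℕ) = m + 1 := by omega
    rw [finRotate_eq_of_eq h']
    simp only [Mmat, Matrix.of_apply, Matrix.one_apply, Fin.ext_iff]
    norm_num
    simp only [Fin.ext_iff, Fin.val_zero]
    try split_ifs <;> first | (norm_num; done) | (exfalso; omega)

lemma isUnit_det_Mmat (m : ℕ) : IsUnit (Mmat F (m + 2)).det := by
  apply isUnit_det_aux _ (finRotate (m + 2))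
  have hbt : ((Mmat F (m + 2)).submatrix (finRotate (m + 2)) id).BlockTriangular
      OrderDual.toDual := by
    intro i j hij
    have hij' : (i : ℕ) < (j : ℕ) := hij
    have hj := j.isLt
    rw [Mmat_perm_entry, if_neg (by omega), if_neg (by omega)]
  rw [Matrix.det_of_lowerTriangular _ hbt]
  apply Finset.prod_eq_one
  intro i _
  rw [Mmat_perm_entry, if_pos rfl]

lemma isUnit_det_Mmat_sub_one (m : ℕ) : IsUnit (Mmat F (m + 2) - 1).det := by
  apply isUnit_det_aux _ (finRotate (m + 2))
  have hbt : ((Mmat F (m + 2) - 1).submatrix (finRotate (m + 2)) id).BlockTriangular id := by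
    intro i j hij
    have hij' : (j : ℕ) < (i : ℕ) := hij
    rw [Mmat_sub_one_perm_entry, if_neg (by omega), if_neg (by omega)]
  rw [Matrix.det_of_upperTriangular hbt]
  apply Finset.prod_eq_one
  intro i _
  rw [Mmat_sub_one_perm_entry, if_pos rfl]

end Stmt2Aux

/-- For `n ≥ 2` and pencils `A(s) = sI + A`, `B(s) = sI + B`, there is a pencil
`P(s)` of normal rank `n` with `A(s) + P(s)` strictly equivalent to `B(s)`. -/
theorem stmt2 (F : Type*) [Field F] (n : ℕ) (hn : 2 ≤ n)
    (A B : Matrix (Fin n) (Fin n) F) :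
    ∃ P : Matrix (Fin n) (Fin n) (Polynomial F), IsPencil P ∧ normalRank P = n ∧
      StrictEquiv (pencilOf A 1 + P) (pencilOf B 1) := by
  classical
  obtain ⟨m, rfl⟩ : ∃ m, n = m + 2 := ⟨n - 2, by omega⟩
  set M : Matrix (Fin (m + 2)) (Fin (m + 2)) F := Stmt2Aux.Mmat F (m + 2) with hMdef
  have hdM : IsUnit M.det := Stmt2Aux.isUnit_det_Mmat m
  have hdM1 : IsUnit (M - 1).det := Stmt2Aux.isUnit_det_Mmat_sub_one m
  have hcm : Matrix.charmatrix (-((M - 1)⁻¹ * (M * B - A))) =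
      Matrix.diagonal (fun _ => (Polynomial.X : Polynomial F)) +
        ((M - 1)⁻¹ * (M * B - A)).map Polynomial.C := by
    unfold Matrix.charmatrix
    rw [Matrix.scalar_apply, map_neg Polynomial.C.mapMatrix, sub_neg_eq_add,
      RingHom.mapMatrix_apply]
  have hdiag : ((M - 1).map Polynomial.C) *
      Matrix.diagonal (fun _ => (Polynomial.X : Polynomial F)) =
      (Polynomial.X : Polynomial F) • (M - 1).map Polynomial.C := by
    ext i j
    simp [Matrix.mul_diagonal, mul_comm]
  have hfac : pencilOf (M * B - A) (M - 1) =
      ((M - 1).map Polynomial.C) * Matrix.charmatrix (-((M - 1)⁻¹ * (M * B - A))) := by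
    rw [hcm, mul_add, hdiag, ← Matrix.map_mul, Matrix.mul_nonsing_inv_cancel_left _ _ hdM1]
    unfold pencilOf
    exact add_comm _ _
  have hdet : (pencilOf (M * B - A) (M - 1)).det ≠ 0 := by
    rw [hfac, Matrix.det_mul]
    refine mul_ne_zero ?_ ?_
    · rw [← RingHom.mapMatrix_apply, ← RingHom.map_det]
      simpa using hdM1.ne_zero
    · rw [← Matrix.charpoly]
      exact (Matrix.charpoly_monic _).ne_zero
  refine ⟨pencilOf (M * B - A) (M - 1), ?_, ?_, ?_⟩
  · -- IsPencil
    intro i j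
    simp only [pencilOf, Matrix.add_apply, Matrix.map_apply, Matrix.smul_apply, smul_eq_mul]
    refine le_trans (Polynomial.degree_add_le _ _)
      (max_le (Polynomial.degree_C_le.trans (by norm_num)) ?_)
    refine le_trans (Polynomial.degree_mul_le _ _) ?_
    refine le_trans (add_le_add Polynomial.degree_X_le Polynomial.degree_C_le) (by norm_num)
  · -- normalRank
    have hu : IsUnit ((pencilOf (M * B - A) (M - 1)).map
        (algebraMap (Polynomial F) (RatFunc F))).det := by
      rw [← RingHom.mapMatrix_apply, ← RingHom.map_det]
      exact isUnit_iff_ne_zero.mpr (RatFunc.algebraMap_ne_zero hdet)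
    unfold normalRank
    rw [Matrix.rank_of_isUnit _ ((Matrix.isUnit_iff_isUnit_det _).mpr hu), Fintype.card_fin]
  · -- StrictEquiv
    refine ⟨M, 1, hdM, by simp, ?_⟩
    have h1 : pencilOf A 1 + pencilOf (M * B - A) (M - 1) = pencilOf (M * B) M := by
      unfold pencilOf
      rw [Matrix.map_sub _ (fun a b => map_sub Polynomial.C a b),
        Matrix.map_sub _ (fun a b => map_sub Polynomial.C a b), smul_sub]
      abel
    have h2 : pencilOf (M * B) M = (M.map Polynomial.C) * pencilOf B 1 := by
      unfold pencilOf
      rw [Matrix.map_one _ (map_zero _) (map_one _), mul_add, ← Matrix.map_mul, mul_smul_comm,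
        mul_one]
    rw [h1, h2, Matrix.map_one _ (map_zero _) (map_one _), mul_one]
end

section
/- Let r₁, r, n be integers with 0 ≤ r₁ < r < n, and let I, J ⊂ {1,…,n} with |I| = |J| = r₁. Then there exists a matrix E ∈ F^{n×n} such that rank(E) = r − r₁, the matrix I_n + E is invertible, every row of E indexed by I is zero, and every column of E indexed by J is zero. -/
/-!
Put `S = Iᶜ`, `T = Jᶜ`, `m = r - r₁`, and take `E = A B`, where the columns of `A` are the unit
vectors `e_{f k}` and the rows of `B` are the `e_{g k}ᵀ` for injective `f : Fin m → S`,
`g : Fin m → T`. Then `Aᵀ A = 1 = B Bᵀ`, so `E` has rank `m`, and its rows outside `S` and columns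
outside `T` vanish. By Sylvester, `det (1 + A B) = det (1 + B A)`, and `(B A) k l = [g k = f l]`
is strictly lower triangular as soon as `g k = f l` forces `l < k`. Such `f, g` exist because
`m < |S|, |T|`: enumerate `m + 1` elements `t` of `T`, replace the values of `t` outside `S` by
fresh elements of `S` to get `s`, and put `f l = s (l + 1)`, `g k = t k`.
-/

open Matrix Function Finset

section Matrix

variable {α ι R : Type*} [Fintype α] [DecidableEq α] [CommRing R]

lemma one_submatrix_mul_one_submatrix (f g : ι → α) :
    (1 : Matrix α α R).submatrix g id * (1 : Matrix α α R).submatrix id f =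
      (1 : Matrix α α R).submatrix g f := by
  simpa using one_submatrix_mul g (Equiv.refl α) ((1 : Matrix α α R).submatrix id f)

variable [Fintype ι] {f g : ι → α}

lemma rank_one_submatrix_mul_one_submatrix [DecidableEq ι] [Nontrivial R] (hf : Injective f)
    (hg : Injective g) :
    ((1 : Matrix α α R).submatrix id f * (1 : Matrix α α R).submatrix g id).rank =
      Fintype.card ι := by
  set A := (1 : Matrix α α R).submatrix id f
  set B := (1 : Matrix α α R).submatrix g id
  refine le_antisymm ((rank_mul_le_left A B).trans (rank_le_card_width A)) ?_
  have hA : Aᵀ * A = 1 := by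
    rw [transpose_submatrix, transpose_one, one_submatrix_mul_one_submatrix, submatrix_one _ hf]
  have hB : B * Bᵀ = 1 := by
    rw [transpose_submatrix, transpose_one, one_submatrix_mul_one_submatrix, submatrix_one _ hg]
  calc Fintype.card ι = (1 : Matrix ι ι R).rank := rank_one.symm
    _ = (Aᵀ * (A * B) * Bᵀ).rank := by
      rw [Matrix.mul_assoc, Matrix.mul_assoc, hB, Matrix.mul_one, hA]
    _ ≤ (A * B).rank := (rank_mul_le_left _ _).trans (rank_mul_le_right _ _)

lemma det_one_add_one_submatrix_mul_one_submatrix [LinearOrder ι]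
    (hfg : ∀ k l, g k = f l → l < k) :
    (1 + (1 : Matrix α α R).submatrix id f * (1 : Matrix α α R).submatrix g id).det = 1 := by
  rw [det_one_add_mul_comm, one_submatrix_mul_one_submatrix]
  have hlower : (1 + (1 : Matrix α α R).submatrix g f).IsLowerTriangular := by
    intro k l hkl
    have hkl : k < l := hkl
    rw [Matrix.add_apply, one_apply_ne hkl.ne, submatrix_apply,
      one_apply_ne fun h => (hfg k l h).not_gt hkl, add_zero]
  rw [det_of_isLowerTriangular _ hlower]
  exact prod_eq_one fun k _ => by
    rw [Matrix.add_apply, one_apply_eq, submatrix_apply,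
      one_apply_ne fun h => (hfg k k h).false, add_zero]

end Matrix

section Combinatorics

variable {α ι : Type*} [DecidableEq α] [Fintype ι]

lemma Function.Injective.exists_injective_into_finset {t : ι → α} (ht : Injective t)
    {S : Finset α} (hS : Fintype.card ι ≤ #S) :
    ∃ s : ι → α, Injective s ∧ (∀ i, s i ∈ S) ∧ ∀ i, t i ∈ S → s i = t i := by
  obtain ⟨S₀, htS₀, hS₀S, hS₀⟩ := exists_subsuperset_card_eq (n := Fintype.card ι)
    (s := (univ.filter fun i => t i ∈ S).image t) (t := S)
    (image_subset_iff.mpr fun i hi => (mem_filter.mp hi).2)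
    (card_image_le.trans ((card_filter_le _ _).trans card_univ.le)) hS
  let t₀ : {i | t i ∈ S₀} ↪ S₀ :=
    ⟨fun i => ⟨t i, i.2⟩, fun i j h => Subtype.ext (ht (congrArg Subtype.val h))⟩
  obtain ⟨e, he⟩ := Cardinal.extend_function_finite t₀
    ⟨Fintype.equivOfCardEq (by rw [Fintype.card_coe, hS₀])⟩
  refine ⟨fun i => e i, Subtype.val_injective.comp e.injective, fun i => hS₀S (e i).2,
    fun i hi => ?_⟩
  have hi₀ : t i ∈ S₀ := htS₀ (mem_image_of_mem t (mem_filter.mpr ⟨mem_univ i, hi⟩))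
  exact congrArg Subtype.val (he ⟨i, hi₀⟩)

lemma exists_injective_pair_of_lt_card {m : ℕ} {S T : Finset α} (hS : m < #S) (hT : m < #T) :
    ∃ f g : Fin m → α, Injective f ∧ Injective g ∧ (∀ k, f k ∈ S) ∧ (∀ k, g k ∈ T) ∧
      ∀ k l, g k = f l → l < k := by
  obtain ⟨t, htT⟩ := Function.Embedding.exists_of_card_le_finset (α := Fin (m + 1)) (s := T)
    (by simpa using hT)
  obtain ⟨s, hs, hsS, hst⟩ := t.injective.exists_injective_into_finset (S := S) (by simpa using hS)
  refine ⟨s ∘ Fin.succ, t ∘ Fin.castSucc, hs.comp (Fin.succ_injective _),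
    t.injective.comp (Fin.castSucc_injective _), fun k => hsS _,
    fun k => htT (Set.mem_range_self _), fun k l hkl => ?_⟩
  have hkl : t k.castSucc = s l.succ := hkl
  have hk : k.castSucc = l.succ := hs ((hst _ (hkl ▸ hsS _)).trans hkl)
  rw [Fin.ext_iff, Fin.val_castSucc, Fin.val_succ] at hk
  exact Fin.lt_def.mpr (by omega)

end Combinatorics

theorem exists_rank_eq_isUnit_det_one_add {α R : Type*} [Fintype α] [DecidableEq α] [CommRing R]
    [Nontrivial R] {m : ℕ} {S T : Finset α} (hS : m < #S) (hT : m < #T) :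
    ∃ E : Matrix α α R, E.rank = m ∧ IsUnit (1 + E).det ∧
      (∀ i ∉ S, ∀ j, E i j = 0) ∧ (∀ j ∉ T, ∀ i, E i j = 0) := by
  obtain ⟨f, g, hf, hg, hfS, hgT, hfg⟩ := exists_injective_pair_of_lt_card hS hT
  refine ⟨(1 : Matrix α α R).submatrix id f * (1 : Matrix α α R).submatrix g id,
    by rw [rank_one_submatrix_mul_one_submatrix hf hg, Fintype.card_fin],
    by rw [det_one_add_one_submatrix_mul_one_submatrix hfg]; exact isUnit_one,
    fun i hi j => ?_, fun j hj i => ?_⟩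
  · refine (mul_apply ..).trans (sum_eq_zero fun k _ => ?_)
    rw [submatrix_apply, submatrix_apply, id_eq, id_eq,
      one_apply_ne fun h : i = f k => hi (h ▸ hfS k), zero_mul]
  · refine (mul_apply ..).trans (sum_eq_zero fun k _ => ?_)
    rw [submatrix_apply, submatrix_apply, id_eq, id_eq,
      one_apply_ne fun h : g k = j => hj (h ▸ hgT k), mul_zero]

/-- Given `0 ≤ r₁ < r < n` and index sets `I, J` of cardinality `r₁`, there is a
matrix `E` with `rank E = r - r₁`, `I + E` invertible, the rows of `E` indexed by `I` zero and
the columns of `E` indexed by `J` zero. -/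
theorem stmt3 (F : Type*) [Field F] (r₁ r n : ℕ) (h1 : r₁ < r) (h2 : r < n)
    (I J : Finset (Fin n)) (hI : I.card = r₁) (hJ : J.card = r₁) :
    ∃ E : Matrix (Fin n) (Fin n) F, E.rank = r - r₁ ∧ IsUnit (1 + E).det ∧
      (∀ i ∈ I, ∀ j, E i j = 0) ∧ (∀ j ∈ J, ∀ i, E i j = 0) := by
  have hIc : r - r₁ < #Iᶜ := by rw [card_compl, hI, Fintype.card_fin]; omega
  have hJc : r - r₁ < #Jᶜ := by rw [card_compl, hJ, Fintype.card_fin]; omega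
  obtain ⟨E, hrank, hunit, hrows, hcols⟩ := exists_rank_eq_isUnit_det_one_add (R := F) hIc hJc
  exact ⟨E, hrank, hunit, fun i hi => hrows i (notMem_compl.mpr hi),
    fun j hj => hcols j (notMem_compl.mpr hj)⟩
end

section
/- Let a(s), b(s) ∈ F[s] be nonzero polynomials of degree at most 1, and let r ∈ {0,1}. If |F| > 2 or r = 0, then there exists p(s) ∈ F[s] of degree at most 1 with normal rank r (i.e., p(s) = 0 if r = 0, p(s) ≠ 0 if r = 1) such that a(s) + p(s) = c·b(s) for some nonzero c ∈ F, if and only if the interlacing condition ψ_{1−r}(s,t) | φ₁(s,t) | ψ_{1+r}(s,t) holds, where φ₁ and ψ₁ are the homogeneous invariant factors of a(s) and b(s). -/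
/-! Everything is `1 × 1`, so both invariant factors are the scalar pencils themselves, made
monic. For `r = 0` interlacing says `ψ₁ ∣ φ₁ ∣ ψ₁`; setting `t = 1` turns `homIF1 a` into
an associate of `a`, so this says that `a` and `b` are associates, i.e. `a = c b`. For `r = 1`
interlacing is vacuous (`1 ∣ φ₁ ∣ 0`), and as `|F| ≥ 3` some `c ≠ 0` has `c b ≠ a`, so
`p = c b - a` works. -/

open Polynomial

section Interlace

variable {R : Type*} [CommRing R] (φ ψ : ℕ → R)

theorem interlace_one_zero_iff : Interlace 1 0 φ ψ ↔ φ 0 ∣ ψ 0 ∧ ψ 0 ∣ φ 0 := by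
  refine ⟨fun h => by simpa [extIF] using h 1 le_rfl le_rfl, fun h i hi1 hi2 => ?_⟩
  obtain rfl : i = 1 := le_antisymm hi2 hi1
  simpa [extIF] using h

theorem interlace_one_one : Interlace 1 1 φ ψ := by
  intro i hi1 hi2
  obtain rfl : i = 1 := le_antisymm hi2 hi1
  norm_num [extIF]

end Interlace

section ScalarPencil

variable {F : Type*} [Field F]

theorem associated_C_inv_leadingCoeff_mul (a : F[X]) :
    Associated (C a.leadingCoeff⁻¹ * a) a := by
  rcases eq_or_ne a 0 with rfl | ha
  · simp
  · exact associated_unit_mul_left a _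
      (isUnit_C.mpr (inv_ne_zero (leadingCoeff_ne_zero.mpr ha)).isUnit)

theorem aeval_homIF1 {a : F[X]} (ha : a.degree ≤ 1) :
    MvPolynomial.aeval ![X, 1] (homIF1 a) = C a.leadingCoeff⁻¹ * a := by
  set L := a.leadingCoeff with hL
  conv_rhs => rw [eq_X_add_C_of_degree_le_one ha]
  simp only [homIF1, ← hL, map_mul, map_add, MvPolynomial.aeval_C, MvPolynomial.aeval_X,
    Matrix.cons_val_zero, Matrix.cons_val_one, algebraMap_eq]
  ring

theorem dvd_of_homIF1_dvd {a b : F[X]} (ha : a.degree ≤ 1) (hb : b.degree ≤ 1)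
    (h : homIF1 a ∣ homIF1 b) : a ∣ b := by
  have hab := _root_.map_dvd (MvPolynomial.aeval (R := F) ![(X : F[X]), 1]) h
  rwa [aeval_homIF1 ha, aeval_homIF1 hb,
    (associated_C_inv_leadingCoeff_mul a).dvd_iff_dvd_left,
    (associated_C_inv_leadingCoeff_mul b).dvd_iff_dvd_right] at hab

theorem homIF1_C_mul {c : F} (hc : c ≠ 0) (b : F[X]) : homIF1 (C c * b) = homIF1 b := by
  simp only [homIF1, leadingCoeff_mul, leadingCoeff_C, coeff_C_mul, mul_inv, map_mul]
  have hcc : (MvPolynomial.C c⁻¹ : MvPolynomial (Fin 2) F) * MvPolynomial.C c = 1 := by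
    rw [← map_mul, inv_mul_cancel₀ hc, map_one]
  linear_combination (MvPolynomial.C b.leadingCoeff⁻¹ *
    (MvPolynomial.C (b.coeff 1) * MvPolynomial.X 0 +
      MvPolynomial.C (b.coeff 0) * MvPolynomial.X 1)) * hcc

theorem exists_eq_C_mul_of_associated {a b : F[X]} (h : Associated a b) :
    ∃ c ≠ 0, a = C c * b := by
  obtain ⟨u, hu⟩ := h.symm
  obtain ⟨c, hc, hcu⟩ := isUnit_iff.mp u.isUnit
  exact ⟨c, hc.ne_zero, by rw [← hu, ← hcu, mul_comm]⟩

theorem exists_eq_C_mul_iff_homIF1_dvd_dvd {a b : F[X]} (ha : a.degree ≤ 1)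
    (hb : b.degree ≤ 1) :
    (∃ c ≠ 0, a = C c * b) ↔ homIF1 b ∣ homIF1 a ∧ homIF1 a ∣ homIF1 b := by
  constructor
  · rintro ⟨c, hc, rfl⟩
    rw [homIF1_C_mul hc]
    exact ⟨dvd_rfl, dvd_rfl⟩
  · rintro ⟨hba, hab⟩
    exact exists_eq_C_mul_of_associated
      (associated_of_dvd_dvd (dvd_of_homIF1_dvd ha hb hab) (dvd_of_homIF1_dvd hb ha hba))

theorem exists_ne_zero_C_mul_ne (hF : 2 < Cardinal.mk F) {b : F[X]} (hb : b ≠ 0) (a : F[X]) :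
    ∃ c ≠ 0, C c * b ≠ a := by
  have h3 : 3 ≤ Cardinal.mk F := by exact_mod_cast Order.succ_le_of_lt hF
  obtain ⟨x, hx0, hx1⟩ := Cardinal.exists_ne_ne_of_three_le h3 (0 : F) 1
  by_cases hba : b = a
  · refine ⟨x, hx0, fun hx => hx1 (C_injective (mul_right_cancel₀ hb ?_))⟩
    rw [hx, hba, C_1, one_mul]
  · exact ⟨1, one_ne_zero, by simpa using hba⟩

theorem exists_ne_zero_add_eq_C_mul (hF : 2 < Cardinal.mk F) {a b : F[X]} (ha : a.degree ≤ 1)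
    (hb : b.degree ≤ 1) (hb0 : b ≠ 0) :
    ∃ p : F[X], p.degree ≤ 1 ∧ p ≠ 0 ∧ ∃ c ≠ 0, a + p = C c * b := by
  obtain ⟨c, hc, hcb⟩ := exists_ne_zero_C_mul_ne hF hb0 a
  refine ⟨C c * b - a, (degree_sub_le _ _).trans (max_le ?_ ha), sub_ne_zero.mpr hcb,
    c, hc, by ring⟩
  exact (degree_mul_le _ _).trans (by simpa using add_le_add (degree_C_le (a := c)) hb)

end ScalarPencil

theorem stmt12_general (F : Type*) [Field F] (a b : Polynomial F) (hb : b ≠ 0)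
    (hda : a.degree ≤ 1) (hdb : b.degree ≤ 1) (r : ℕ) (hr : r ≤ 1)
    (hF : 2 < Cardinal.mk F ∨ r = 0) :
    (∃ p : Polynomial F, p.degree ≤ 1 ∧ (r = 0 → p = 0) ∧ (r = 1 → p ≠ 0) ∧
        ∃ c : F, c ≠ 0 ∧ a + p = Polynomial.C c * b) ↔
      Interlace 1 r (fun _ => homIF1 b) (fun _ => homIF1 a) := by
  interval_cases r
  · rw [interlace_one_zero_iff, ← exists_eq_C_mul_iff_homIF1_dvd_dvd hda hdb]
    constructor
    · rintro ⟨p, -, hp, -, hc⟩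
      simpa [hp rfl] using hc
    · intro hc
      exact ⟨0, by simp, fun _ => rfl, (absurd · zero_ne_one), by simpa using hc⟩
  · obtain ⟨p, hp, hp0, hc⟩ :=
      exists_ne_zero_add_eq_C_mul (hF.resolve_right one_ne_zero) hda hdb hb
    simp only [interlace_one_one, iff_true]
    exact ⟨p, hp, (absurd · one_ne_zero), fun _ => hp0, hc⟩

/-- `1 × 1` case: for nonzero pencils `a(s)`, `b(s)` and `r ∈ {0,1}`, if
`|F| > 2` or `r = 0`, there exists a `1 × 1` pencil `p(s)` of normal rank `r` with
`a(s) + p(s)` strictly equivalent to `b(s)` iff `ψ_{1-r} ∣ φ₁ ∣ ψ_{1+r}`. -/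
theorem stmt12 (F : Type*) [Field F] (a b : Polynomial F) (ha : a ≠ 0) (hb : b ≠ 0)
    (hda : a.degree ≤ 1) (hdb : b.degree ≤ 1) (r : ℕ) (hr : r ≤ 1)
    (hF : 2 < Cardinal.mk F ∨ r = 0) :
    (∃ p : Polynomial F, p.degree ≤ 1 ∧ (r = 0 → p = 0) ∧ (r = 1 → p ≠ 0) ∧
        ∃ c : F, c ≠ 0 ∧ a + p = Polynomial.C c * b) ↔
      Interlace 1 r (fun _ => homIF1 b) (fun _ => homIF1 a) :=
  stmt12_general F a b hb hda hdb r hr hF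
end
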